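/- arXiv:1110.5111 — 2 statements merged into one kernel-verified Lean document; each statement's English description precedes it below -/
import Mathlib

section
/- Let G be a connected non-degenerate trigraph and let G' be an optimal antithickening of G with thickening map I. Then for any semiadjacent pair of vertices a, b of G', either |I(a)| = |I(b)| = 1 and the unique vertices of I(a) and I(b) are semiadjacent in G, or (I(a), I(b)) is a deletion-minimal homogeneous pair of strong cliques of G. -/
/-- A trigraph on a vertex type `V`: a symmetric adjacency function with values in
`{1, 0, -1}`, zero on the diagonal, such that semiedges form a matching. -/
structure Trigraph (V : Type) where
  θ : V → V → ℤ
  range_mem : ∀ u v, θ u v = 1 ∨ θ u v = 0 ∨ θ u v = -1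
  symm : ∀ u v, θ u v = θ v u
  refl_zero : ∀ v, θ v v = 0
  semi_matching : ∀ u v w : V, u ≠ v → u ≠ w → v ≠ w → θ u v = 0 → θ u w ≠ 0

namespace Trigraph

variable {V V' V'' : Type}

/-- `u` and `v` are strongly adjacent. -/
def StrongAdj (G : Trigraph V) (u v : V) : Prop := G.θ u v = 1

/-- Distinct `u` and `v` are semiadjacent. -/
def SemiAdj (G : Trigraph V) (u v : V) : Prop := u ≠ v ∧ G.θ u v = 0

/-- Distinct `u` and `v` are adjacent. -/
def Adj (G : Trigraph V) (u v : V) : Prop := u ≠ v ∧ (G.θ u v = 1 ∨ G.θ u v = 0)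

/-- Distinct `u` and `v` are antiadjacent. -/
def AntiAdj (G : Trigraph V) (u v : V) : Prop := u ≠ v ∧ (G.θ u v = 0 ∨ G.θ u v = -1)

/-- `u` and `v` are strongly antiadjacent. -/
def StrongAntiAdj (G : Trigraph V) (u v : V) : Prop := G.θ u v = -1

/-- `X` is strongly complete to `Y`. -/
def StronglyComplete (G : Trigraph V) (X Y : Set V) : Prop :=
  ∀ u ∈ X, ∀ v ∈ Y, G.StrongAdj u v

/-- `X` is strongly anticomplete to `Y`. -/
def StronglyAnticomplete (G : Trigraph V) (X Y : Set V) : Prop :=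
  ∀ u ∈ X, ∀ v ∈ Y, G.StrongAntiAdj u v

/-- A strong clique: pairwise strongly adjacent vertices. -/
def IsStrongClique (G : Trigraph V) (K : Set V) : Prop := K.Pairwise G.StrongAdj

/-- A stable set: pairwise antiadjacent vertices. -/
def IsStableSet (G : Trigraph V) (S : Set V) : Prop := S.Pairwise G.AntiAdj

/-- The neighbourhood of a vertex: the set of vertices adjacent to it. -/
def neighborhood (G : Trigraph V) (v : V) : Set V := {u | G.Adj v u}

/-- Claw-free: no vertex has three pairwise antiadjacent vertices in its neighbourhood. -/
def ClawFree (G : Trigraph V) : Prop :=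
  ¬ ∃ v a b c : V, G.Adj v a ∧ G.Adj v b ∧ G.Adj v c ∧
    G.AntiAdj a b ∧ G.AntiAdj a c ∧ G.AntiAdj b c

/-- Cobipartite: the vertex set is the union of two strong cliques. -/
def Cobipartite (G : Trigraph V) : Prop :=
  ∃ K1 K2 : Set V, G.IsStrongClique K1 ∧ G.IsStrongClique K2 ∧ K1 ∪ K2 = Set.univ

/-- Quasi-line: the neighbourhood of every vertex is the union of two strong cliques. -/
def QuasiLine (G : Trigraph V) : Prop :=
  ∀ v : V, ∃ K1 K2 : Set V, G.IsStrongClique K1 ∧ G.IsStrongClique K2 ∧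
    G.neighborhood v = K1 ∪ K2

/-- Connected: any two vertices are joined by a sequence of consecutively adjacent vertices. -/
def Connected (G : Trigraph V) : Prop :=
  ∀ u v : V, Relation.ReflTransGen G.Adj u v

/-- Non-degenerate: quasi-line and not cobipartite, or claw-free with stability number ≥ 3. -/
def NonDegenerate (G : Trigraph V) : Prop :=
  (G.QuasiLine ∧ ¬ G.Cobipartite) ∨
  (G.ClawFree ∧ ∃ S : Set V, G.IsStableSet S ∧ 3 ≤ S.ncard)

/-- A homogeneous set: `|V| > |X| ≥ 2` and every vertex outside `X` is strongly complete
or strongly anticomplete to `X`. -/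
def HomogeneousSet (G : Trigraph V) (X : Set V) : Prop :=
  2 ≤ X.ncard ∧ X ≠ Set.univ ∧
  ∀ v ∉ X, G.StronglyComplete {v} X ∨ G.StronglyAnticomplete {v} X

/-- `v1 v2 v3 v4` is a square: the pairs `v1v3`, `v2v4` are antiadjacent and the other
four pairs are adjacent. -/
def IsSquare (G : Trigraph V) (v1 v2 v3 v4 : V) : Prop :=
  G.AntiAdj v1 v3 ∧ G.AntiAdj v2 v4 ∧
  G.Adj v1 v2 ∧ G.Adj v2 v3 ∧ G.Adj v3 v4 ∧ G.Adj v4 v1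

/-- `X` contains a square. -/
def HasSquareIn (G : Trigraph V) (X : Set V) : Prop :=
  ∃ v1 v2 v3 v4 : V, G.IsSquare v1 v2 v3 v4 ∧ ({v1, v2, v3, v4} : Set V) ⊆ X

/-- Homogeneous pair of strong cliques `(A, B)`. -/
def HPOSC (G : Trigraph V) (A B : Set V) : Prop :=
  A.Nonempty ∧ B.Nonempty ∧ Disjoint A B ∧
  G.IsStrongClique A ∧ G.IsStrongClique B ∧
  ¬ (∃ a b : V, A = {a} ∧ B = {b}) ∧
  ∀ v ∉ A ∪ B,
    (G.StronglyComplete {v} A ∨ G.StronglyAnticomplete {v} A) ∧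
    (G.StronglyComplete {v} B ∨ G.StronglyAnticomplete {v} B)

/-- Deletion-minimal homogeneous pair of strong cliques. -/
def DeletionMinimal (G : Trigraph V) (A B : Set V) : Prop :=
  G.HPOSC A B ∧ G.HasSquareIn (A ∪ B) ∧
  (∀ a ∈ A, ¬ G.StronglyComplete {a} B ∧ ¬ G.StronglyAnticomplete {a} B) ∧
  (∀ b ∈ B, ¬ G.StronglyComplete {b} A ∧ ¬ G.StronglyAnticomplete {b} A)

/-- There is a square contained in `X` intersecting both `S1` and `S2`. -/
def SquareMeets (G : Trigraph V) (X S1 S2 : Set V) : Prop :=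
  ∃ v1 v2 v3 v4 : V, G.IsSquare v1 v2 v3 v4 ∧ ({v1, v2, v3, v4} : Set V) ⊆ X ∧
    (({v1, v2, v3, v4} : Set V) ∩ S1).Nonempty ∧
    (({v1, v2, v3, v4} : Set V) ∩ S2).Nonempty

/-- Square-connected homogeneous pair of strong cliques. -/
def SquareConnected (G : Trigraph V) (A B : Set V) : Prop :=
  G.HPOSC A B ∧
  (∀ A' A'' : Set V, A'.Nonempty → A''.Nonempty → A' ∪ A'' = A → Disjoint A' A'' →
    G.SquareMeets (A ∪ B) A' A'') ∧
  (∀ B' B'' : Set V, B'.Nonempty → B''.Nonempty → B' ∪ B'' = B → Disjoint B' B'' →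
    G.SquareMeets (A ∪ B) B' B'')

/-- Inclusion-maximal square-connected homogeneous pair of strong cliques. -/
def MaxSquareConnected (G : Trigraph V) (A B : Set V) : Prop :=
  G.SquareConnected A B ∧
  ∀ A' B' : Set V, G.SquareConnected A' B' → A ⊆ A' → B ⊆ B' → A' = A ∧ B' = B

/-- Two homogeneous pairs have skew intersection if a part of one intersects both
parts of the other. -/
def SkewIntersection (A1 B1 A2 B2 : Set V) : Prop :=
  ((A1 ∩ A2).Nonempty ∧ (A1 ∩ B2).Nonempty) ∨
  ((B1 ∩ A2).Nonempty ∧ (B1 ∩ B2).Nonempty) ∨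
  ((A2 ∩ A1).Nonempty ∧ (A2 ∩ B1).Nonempty) ∨
  ((B2 ∩ A1).Nonempty ∧ (B2 ∩ B1).Nonempty)

/-- Laminar: contains no square-connected homogeneous pair of strong cliques. -/
def Laminar (G : Trigraph V) : Prop := ¬ ∃ A B : Set V, G.SquareConnected A B

/-- `G` is a thickening of `G'` via the map `I` (equivalently, `G'` is an antithickening
of `G`): the `I v` are nonempty strong cliques partitioning `V(G)` respecting adjacency. -/
def IsThickening (G : Trigraph V) (G' : Trigraph V') (I : V' → Set V) : Prop :=
  (∀ v : V', (I v).Nonempty ∧ G.IsStrongClique (I v)) ∧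
  (∀ u v : V', u ≠ v → Disjoint (I u) (I v)) ∧
  (⋃ v : V', I v) = Set.univ ∧
  ∀ u v : V', u ≠ v →
    (G'.StrongAdj u v → G.StronglyComplete (I u) (I v)) ∧
    (G'.StrongAntiAdj u v → G.StronglyAnticomplete (I u) (I v)) ∧
    (G'.SemiAdj u v →
      ¬ G.StronglyComplete (I u) (I v) ∧ ¬ G.StronglyAnticomplete (I u) (I v))

/-- `G'` (with thickening map `I`) is an optimal antithickening of `G`: it is a laminar
antithickening with the maximum possible number of vertices. -/
def OptimalAntithickening (G : Trigraph V) (G' : Trigraph V') (I : V' → Set V) : Prop :=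
  G.IsThickening G' I ∧ G'.Laminar ∧
  ∀ (W : Type) (H : Trigraph W) (J : W → Set V),
    G.IsThickening H J → H.Laminar → Nat.card W ≤ Nat.card V'

/-- Isomorphism of trigraphs. -/
def Isomorphic (G1 : Trigraph V) (G2 : Trigraph V') : Prop :=
  ∃ f : V ≃ V', ∀ u v : V, G2.θ (f u) (f v) = G1.θ u v

end Trigraph

/-!
If `I a` and `I b` are not both single vertices, refine the semiedge `ab` of `G'`: replace `a` and
`b` by the classes of a partition of `I a ∪ I b` into strong cliques, two classes being adjacent
as they are in `G`. This is an antithickening of `G` with more vertices, and it stays laminar as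
long as the trigraph of the classes has no square. Indeed, no square of the refinement contains
two classes from the same side of the semiedge, so squares collapse onto squares of `G'`; hence a
square-connected pair of the refinement either collapses onto one of `G'`, or has classes on one
side only, which homogeneity rules out. Optimality thus forbids two refinements: into single
vertices, which forces a square in `I a ∪ I b`, and splitting off a vertex of `I a` that is
strongly complete or strongly anticomplete to `I b`.
-/

namespace Trigraph

open Function

variable {V V' W C : Type} {G : Trigraph V}

section Basic

variable {u v u' v' : V}

lemma Adj.symm (h : G.Adj u v) : G.Adj v u := ⟨h.1.symm, by rw [G.symm]; exact h.2⟩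

lemma AntiAdj.symm (h : G.AntiAdj u v) : G.AntiAdj v u := ⟨h.1.symm, by rw [G.symm]; exact h.2⟩

lemma Adj.theta_ne_neg_one (h : G.Adj u v) : G.θ u v ≠ -1 := by
  rcases h.2 with h' | h' <;> omega

lemma AntiAdj.theta_ne_one (h : G.AntiAdj u v) : G.θ u v ≠ 1 := by
  rcases h.2 with h' | h' <;> omega

lemma theta_eq_zero_of_adj_of_antiAdj (h₁ : G.Adj u v) (h₂ : G.AntiAdj u' v')
    (h : G.θ u v = G.θ u' v') : G.θ u v = 0 := by
  rcases h₁.2 with h₁ | h₁ <;> rcases h₂.2 with h₂ | h₂ <;> omega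

lemma IsStrongClique.adj {K : Set V} (hK : G.IsStrongClique K) (hu : u ∈ K) (hv : v ∈ K)
    (huv : u ≠ v) : G.Adj u v :=
  ⟨huv, Or.inl (hK hu hv huv)⟩

lemma IsStrongClique.not_antiAdj {K : Set V} (hK : G.IsStrongClique K) (hu : u ∈ K)
    (hv : v ∈ K) : ¬ G.AntiAdj u v :=
  fun h => h.theta_ne_one (hK hu hv h.1)

lemma stronglyComplete_comm {X Y : Set V} :
    G.StronglyComplete X Y ↔ G.StronglyComplete Y X :=
  ⟨fun h u hu v hv => (G.symm u v).trans (h v hv u hu),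
    fun h u hu v hv => (G.symm u v).trans (h v hv u hu)⟩

lemma stronglyAnticomplete_comm {X Y : Set V} :
    G.StronglyAnticomplete X Y ↔ G.StronglyAnticomplete Y X :=
  ⟨fun h u hu v hv => (G.symm u v).trans (h v hv u hu),
    fun h u hu v hv => (G.symm u v).trans (h v hv u hu)⟩

end Basic

def Mixed (G : Trigraph V) (X Y : Set V) : Prop :=
  ¬ G.StronglyComplete X Y ∧ ¬ G.StronglyAnticomplete X Y

lemma Mixed.symm {X Y : Set V} (h : G.Mixed X Y) : G.Mixed Y X :=
  ⟨stronglyComplete_comm.not.1 h.1, stronglyAnticomplete_comm.not.1 h.2⟩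

lemma Mixed.nonempty_left {X Y : Set V} (h : G.Mixed X Y) : X.Nonempty :=
  Set.nonempty_iff_ne_empty.2 fun hX => h.1 fun _ hu => absurd hu (hX ▸ Set.notMem_empty _)

lemma Mixed.nonempty_right {X Y : Set V} (h : G.Mixed X Y) : Y.Nonempty :=
  h.symm.nonempty_left

lemma mixed_singleton_iff {x y : V} : G.Mixed {x} {y} ↔ G.θ x y = 0 := by
  simp only [Mixed, StronglyComplete, StronglyAnticomplete, StrongAdj, StrongAntiAdj,
    Set.mem_singleton_iff, forall_eq]
  rcases G.range_mem x y with h | h | h <;> simp [h]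

def Realizes (G : Trigraph V) (t : ℤ) (X Y : Set V) : Prop :=
  (t = 1 → G.StronglyComplete X Y) ∧ (t = -1 → G.StronglyAnticomplete X Y) ∧
    (t = 0 → G.Mixed X Y)

lemma Realizes.mono {t : ℤ} {X Y X' Y' : Set V} (h : G.Realizes t X Y) (ht : t ≠ 0)
    (hX : X' ⊆ X) (hY : Y' ⊆ Y) : G.Realizes t X' Y' :=
  ⟨fun h1 u hu v hv => h.1 h1 u (hX hu) v (hY hv),
    fun h1 u hu v hv => h.2.1 h1 u (hX hu) v (hY hv), fun h0 => absurd h0 ht⟩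

lemma IsThickening.realizes {G' : Trigraph V'} {I : V' → Set V}
    (h : G.IsThickening G' I) {u v : V'} (huv : u ≠ v) : G.Realizes (G'.θ u v) (I u) (I v) :=
  ⟨(h.2.2.2 u v huv).1, (h.2.2.2 u v huv).2.1, fun h0 => (h.2.2.2 u v huv).2.2 ⟨huv, h0⟩⟩

lemma IsThickening.mixed {G' : Trigraph V'} {I : V' → Set V}
    (h : G.IsThickening G' I) {a b : V'} (hab : G'.SemiAdj a b) : G.Mixed (I a) (I b) :=
  (h.realizes hab.1).2.2 hab.2

lemma SemiAdj.symm {a b : V} (hab : G.SemiAdj a b) : G.SemiAdj b a :=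
  ⟨hab.1.symm, by rw [G.symm]; exact hab.2⟩

lemma SemiAdj.theta_ne_zero {a b x w : V} (hab : G.SemiAdj a b) (hx : x = a ∨ x = b)
    (hwa : w ≠ a) (hwb : w ≠ b) : G.θ x w ≠ 0 := by
  rcases hx with rfl | rfl
  · exact G.semi_matching x b w hab.1 hwa.symm hwb.symm hab.2
  · exact G.semi_matching x a w hab.1.symm hwb.symm hwa.symm hab.symm.2

section Square

variable {v₁ v₂ v₃ v₄ x y : V}

lemma IsSquare.rotate (h : G.IsSquare v₁ v₂ v₃ v₄) : G.IsSquare v₂ v₃ v₄ v₁ :=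
  ⟨h.2.1, h.1.symm, h.2.2.2.1, h.2.2.2.2.1, h.2.2.2.2.2, h.2.2.1⟩

lemma IsSquare.flip (h : G.IsSquare v₁ v₂ v₃ v₄) : G.IsSquare v₁ v₄ v₃ v₂ :=
  ⟨h.1, h.2.1.symm, h.2.2.2.2.2.symm, h.2.2.2.2.1.symm, h.2.2.2.1.symm, h.2.2.1.symm⟩

lemma IsSquare.ne (h : G.IsSquare v₁ v₂ v₃ v₄) :
    v₁ ≠ v₂ ∧ v₁ ≠ v₃ ∧ v₁ ≠ v₄ ∧ v₂ ≠ v₃ ∧ v₂ ≠ v₄ ∧ v₃ ≠ v₄ :=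
  ⟨h.2.2.1.1, h.1.1, h.2.2.2.2.2.1.symm, h.2.2.2.1.1, h.2.1.1, h.2.2.2.2.1.1⟩

lemma IsSquare.exists_of_mem (h : G.IsSquare v₁ v₂ v₃ v₄)
    (hx : x ∈ ({v₁, v₂, v₃, v₄} : Set V)) :
    ∃ w₂ w₃ w₄, G.IsSquare x w₂ w₃ w₄ ∧ ({x, w₂, w₃, w₄} : Set V) = {v₁, v₂, v₃, v₄} := by
  simp only [Set.mem_insert_iff, Set.mem_singleton_iff] at hx
  rcases hx with rfl | rfl | rfl | rfl
  · exact ⟨_, _, _, h, rfl⟩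
  · exact ⟨_, _, _, h.rotate, by ext; simp only [Set.mem_insert_iff, Set.mem_singleton_iff]; tauto⟩
  · exact ⟨_, _, _, h.rotate.rotate,
      by ext; simp only [Set.mem_insert_iff, Set.mem_singleton_iff]; tauto⟩
  · exact ⟨_, _, _, h.rotate.rotate.rotate,
      by ext; simp only [Set.mem_insert_iff, Set.mem_singleton_iff]; tauto⟩

lemma IsSquare.exists_consecutive (h : G.IsSquare v₁ v₂ v₃ v₄)
    (hx : x ∈ ({v₁, v₂, v₃, v₄} : Set V)) (hy : y ∈ ({v₁, v₂, v₃, v₄} : Set V))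
    (hxy : G.StrongAdj x y) : ∃ z w, G.IsSquare x y z w := by
  obtain ⟨w₂, w₃, w₄, h, hS⟩ := h.exists_of_mem hx
  rw [← hS] at hy
  simp only [Set.mem_insert_iff, Set.mem_singleton_iff] at hy
  rcases hy with rfl | rfl | rfl | rfl
  · exact absurd (G.refl_zero y) (by rw [hxy]; decide)
  · exact ⟨_, _, h⟩
  · exact absurd hxy h.1.theta_ne_one
  · exact ⟨_, _, h.flip⟩

lemma IsSquare.four_le_card [Fintype V] (h : G.IsSquare v₁ v₂ v₃ v₄) : 4 ≤ Fintype.card V := by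
  classical
  obtain ⟨h12, h13, h14, h23, h24, h34⟩ := h.ne
  calc 4 = ({v₁, v₂, v₃, v₄} : Finset V).card := by
        rw [Finset.card_insert_of_notMem (by simp [h12, h13, h14]),
          Finset.card_insert_of_notMem (by simp [h23, h24]), Finset.card_pair h34]
    _ ≤ Fintype.card V := Finset.card_le_univ _

lemma not_singletons_of_hasSquareIn {A B : Set V} (h : G.HasSquareIn (A ∪ B)) :
    ¬ ∃ x y, A = {x} ∧ B = {y} := by
  rintro ⟨x, y, rfl, rfl⟩
  obtain ⟨v₁, v₂, v₃, v₄, hsq, hsub⟩ := h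
  obtain ⟨h12, h13, -, h23, -, -⟩ := hsq.ne
  have hmem : ∀ v ∈ ({v₁, v₂, v₃, v₄} : Set V), v = x ∨ v = y := fun v hv => hsub hv
  rcases hmem v₁ (by simp) with rfl | rfl <;> rcases hmem v₂ (by simp) with rfl | rfl <;>
    rcases hmem v₃ (by simp) with rfl | rfl <;> simp_all

/-- Each diagonal of the square is antiadjacent, so it has a vertex outside the strong
clique `Q`. -/
lemma exists_two_mem_of_isSquare {P Q : Set V} (hQ : G.IsStrongClique Q)
    (hsq : G.IsSquare v₁ v₂ v₃ v₄) (hsub : ({v₁, v₂, v₃, v₄} : Set V) ⊆ P ∪ Q) :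
    ∃ p ∈ ({v₁, v₂, v₃, v₄} : Set V), ∃ p' ∈ ({v₁, v₂, v₃, v₄} : Set V),
      p ≠ p' ∧ p ∈ P ∧ p' ∈ P := by
  have hdiag : ∀ u v, u ∈ ({v₁, v₂, v₃, v₄} : Set V) → v ∈ ({v₁, v₂, v₃, v₄} : Set V) →
      G.AntiAdj u v → u ∈ P ∨ v ∈ P := by
    intro u v hu hv huv
    by_contra! h
    exact hQ.not_antiAdj ((hsub hu).resolve_left h.1) ((hsub hv).resolve_left h.2) huv
  rcases hdiag v₁ v₃ (by simp) (by simp) hsq.1 with h1 | h1 <;>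
    rcases hdiag v₂ v₄ (by simp) (by simp) hsq.2.1 with h2 | h2
  · exact ⟨v₁, by simp, v₂, by simp, hsq.ne.1, h1, h2⟩
  · exact ⟨v₁, by simp, v₄, by simp, hsq.ne.2.2.1, h1, h2⟩
  · exact ⟨v₃, by simp, v₂, by simp, hsq.ne.2.2.2.1.symm, h1, h2⟩
  · exact ⟨v₃, by simp, v₄, by simp, hsq.ne.2.2.2.2.2, h1, h2⟩

end Square

section SquareConnected

variable {P Q : Set V}

lemma HPOSC.symm (h : G.HPOSC P Q) : G.HPOSC Q P := by
  obtain ⟨hP, hQ, hd, hcP, hcQ, hns, hhom⟩ := h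
  refine ⟨hQ, hP, hd.symm, hcQ, hcP, fun ⟨x, y, hx, hy⟩ => hns ⟨y, x, hy, hx⟩, fun v hv => ?_⟩
  rw [Set.union_comm] at hv
  exact (hhom v hv).symm

lemma SquareConnected.symm (h : G.SquareConnected P Q) : G.SquareConnected Q P := by
  rw [SquareConnected, Set.union_comm]
  exact ⟨h.1.symm, h.2.2, h.2.1⟩

lemma SquareConnected.exists_square_mem (h : G.SquareConnected P Q) (hP : P.Nontrivial)
    {p : V} (hp : p ∈ P) : ∃ v₁ v₂ v₃ v₄, G.IsSquare v₁ v₂ v₃ v₄ ∧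
      ({v₁, v₂, v₃, v₄} : Set V) ⊆ P ∪ Q ∧ p ∈ ({v₁, v₂, v₃, v₄} : Set V) := by
  obtain ⟨p', hp', hpp'⟩ := hP.exists_ne p
  obtain ⟨v₁, v₂, v₃, v₄, hsq, hsub, ⟨w, hw, rfl⟩, -⟩ :=
    h.2.1 {p} (P \ {p}) (Set.singleton_nonempty p) ⟨p', hp', hpp'⟩
      (Set.union_sdiff_cancel (Set.singleton_subset_iff.2 hp)) Set.disjoint_sdiff_right
  exact ⟨v₁, v₂, v₃, v₄, hsq, hsub, hw⟩

lemma SquareConnected.hasSquareIn (h : G.SquareConnected P Q) : G.HasSquareIn (P ∪ Q) := by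
  rcases h.1.1.exists_eq_singleton_or_nontrivial with ⟨x, hx⟩ | hP
  · rcases h.1.2.1.exists_eq_singleton_or_nontrivial with ⟨y, hy⟩ | hQ
    · exact absurd ⟨x, y, hx, hy⟩ h.1.2.2.2.2.2.1
    · obtain ⟨q, hq⟩ := h.1.2.1
      obtain ⟨v₁, v₂, v₃, v₄, hsq, hsub, -⟩ := h.symm.exists_square_mem hQ hq
      exact ⟨v₁, v₂, v₃, v₄, hsq, Set.union_comm Q P ▸ hsub⟩
  · obtain ⟨p, hp⟩ := h.1.1
    obtain ⟨v₁, v₂, v₃, v₄, hsq, hsub, -⟩ := h.exists_square_mem hP hp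
    exact ⟨v₁, v₂, v₃, v₄, hsq, hsub⟩

lemma SquareConnected.nontrivial (h : G.SquareConnected P Q) : P.Nontrivial := by
  obtain ⟨v₁, v₂, v₃, v₄, hsq, hsub⟩ := h.hasSquareIn
  obtain ⟨p, -, p', -, hpp', hp, hp'⟩ := exists_two_mem_of_isSquare h.1.2.2.2.2.1 hsq hsub
  exact ⟨p, hp, p', hp', hpp'⟩

/-- The opposite vertex of `p` in a square through `p` lies in `Q`, and so does one of its two
neighbours in the square, since they are antiadjacent. -/
lemma SquareConnected.exists_adj_antiAdj (h : G.SquareConnected P Q) {p : V} (hp : p ∈ P) :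
    (∃ q ∈ Q, G.Adj p q) ∧ ∃ q ∈ Q, G.AntiAdj p q := by
  have hcP := h.1.2.2.2.1
  obtain ⟨v₁, v₂, v₃, v₄, hsq, hsub, hmem⟩ := h.exists_square_mem h.nontrivial hp
  obtain ⟨w₂, w₃, w₄, hsq, hS⟩ := hsq.exists_of_mem hmem
  rw [← hS] at hsub
  have hQ : ∀ w ∈ ({p, w₂, w₃, w₄} : Set V), w ∉ P → w ∈ Q := fun w hw => (hsub hw).resolve_left
  refine ⟨?_, w₃, hQ w₃ (by simp) fun h3 => hcP.not_antiAdj hp h3 hsq.1, hsq.1⟩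
  by_cases h2 : w₂ ∈ P
  · exact ⟨w₄, hQ w₄ (by simp) fun h4 => hcP.not_antiAdj h2 h4 hsq.2.1, hsq.2.2.2.2.2.symm⟩
  · exact ⟨w₂, hQ w₂ (by simp) h2, hsq.2.2.1⟩

lemma SquareConnected.mem_of_theta_eq (h : G.SquareConnected P Q) {u u' : V} (hu : u ∈ P)
    (hu' : u' ∉ Q) (hθ : ∀ q ∈ Q, G.θ u' q = G.θ u q) : u' ∈ P := by
  by_contra hP
  obtain ⟨⟨q, hq, hadj⟩, q', hq', hanti⟩ := h.exists_adj_antiAdj hu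
  rcases (h.1.2.2.2.2.2.2 u' (by rintro (h | h) <;> contradiction)).2 with hc | hc
  · exact hanti.theta_ne_one ((hθ q' hq').symm.trans (hc u' rfl q' hq'))
  · exact hadj.theta_ne_neg_one ((hθ q hq).symm.trans (hc u' rfl q hq))

end SquareConnected

section Image

variable {H : Trigraph W} {f : W → V}

lemma SquareMeets.mono {X S₁ S₂ X' S₁' S₂' : Set V} (h : G.SquareMeets X S₁ S₂) (hX : X ⊆ X')
    (h₁ : S₁ ⊆ S₁') (h₂ : S₂ ⊆ S₂') : G.SquareMeets X' S₁' S₂' := by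
  obtain ⟨v₁, v₂, v₃, v₄, hsq, hsub, hm₁, hm₂⟩ := h
  exact ⟨v₁, v₂, v₃, v₄, hsq, hsub.trans hX, hm₁.mono (Set.inter_subset_inter_right _ h₁),
    hm₂.mono (Set.inter_subset_inter_right _ h₂)⟩

lemma SquareMeets.image
    (hf : ∀ w₁ w₂ w₃ w₄, H.IsSquare w₁ w₂ w₃ w₄ → G.IsSquare (f w₁) (f w₂) (f w₃) (f w₄))
    {X S₁ S₂ : Set W} (h : H.SquareMeets X S₁ S₂) :
    G.SquareMeets (f '' X) (f '' S₁) (f '' S₂) := by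
  obtain ⟨w₁, w₂, w₃, w₄, hsq, hsub, ⟨w, hw, hw₁⟩, ⟨w', hw', hw₂⟩⟩ := h
  have himage : f '' {w₁, w₂, w₃, w₄} = {f w₁, f w₂, f w₃, f w₄} := by
    simp only [Set.image_insert_eq, Set.image_singleton]
  refine ⟨_, _, _, _, hf _ _ _ _ hsq, himage ▸ Set.image_mono hsub, ?_, ?_⟩
  · exact ⟨f w, himage ▸ Set.mem_image_of_mem f hw, Set.mem_image_of_mem f hw₁⟩
  · exact ⟨f w', himage ▸ Set.mem_image_of_mem f hw', Set.mem_image_of_mem f hw₂⟩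

/-- Partitions of `f '' P` lift to partitions of `P`. -/
lemma SquareConnected.image
    (hf : ∀ w₁ w₂ w₃ w₄, H.IsSquare w₁ w₂ w₃ w₄ → G.IsSquare (f w₁) (f w₂) (f w₃) (f w₄))
    {P Q : Set W} (h : H.SquareConnected P Q) (hpair : G.HPOSC (f '' P) (f '' Q)) :
    G.SquareConnected (f '' P) (f '' Q) := by
  have lift : ∀ {P Q : Set W}, H.SquareConnected P Q → ∀ X Y : Set V, X.Nonempty →
      Y.Nonempty → X ∪ Y = f '' P → Disjoint X Y → G.SquareMeets (f '' P ∪ f '' Q) X Y := by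
    intro P Q h X Y hX hY hXY hd
    have hsplit : ∀ {Z : Set V}, Z.Nonempty → Z ⊆ f '' P → (P ∩ f ⁻¹' Z).Nonempty := by
      rintro Z ⟨z, hz⟩ hZ
      obtain ⟨p, hp, rfl⟩ := hZ hz
      exact ⟨p, hp, hz⟩
    have hunion : P ∩ f ⁻¹' X ∪ P ∩ f ⁻¹' Y = P := by
      rw [← Set.inter_union_distrib_left, ← Set.preimage_union, hXY]
      exact Set.inter_eq_left.2 (Set.subset_preimage_image f P)
    refine ((h.2.1 _ _ (hsplit hX (hXY ▸ Set.subset_union_left))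
      (hsplit hY (hXY ▸ Set.subset_union_right)) hunion
      ((hd.preimage f).mono Set.inter_subset_right Set.inter_subset_right)).image hf).mono
      (Set.image_union f P Q).subset ?_ ?_
    · exact (Set.image_mono Set.inter_subset_right).trans (Set.image_preimage_subset f X)
    · exact (Set.image_mono Set.inter_subset_right).trans (Set.image_preimage_subset f Y)
  refine ⟨hpair, lift h, fun X Y hX hY hXY hd => ?_⟩
  rw [Set.union_comm]
  exact lift h.symm X Y hX hY hXY hd

lemma isSquare_map_iff (hf : Injective f) (hθ : ∀ u v, G.θ (f u) (f v) = H.θ u v)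
    {w₁ w₂ w₃ w₄ : W} : G.IsSquare (f w₁) (f w₂) (f w₃) (f w₄) ↔ H.IsSquare w₁ w₂ w₃ w₄ := by
  simp only [IsSquare, Adj, AntiAdj, hf.ne_iff, hθ]

lemma stronglyComplete_or_anticomplete_image (f : W → V) {w : W} {v : V} {P : Set W}
    (hθ : ∀ p ∈ P, G.θ v (f p) = H.θ w p)
    (h : H.StronglyComplete {w} P ∨ H.StronglyAnticomplete {w} P) :
    G.StronglyComplete {v} (f '' P) ∨ G.StronglyAnticomplete {v} (f '' P) := by
  rcases h with h | h
  · exact Or.inl fun _ hx _ ⟨p, hp, hy⟩ => hx ▸ hy ▸ (hθ p hp).trans (h w rfl p hp)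
  · exact Or.inr fun _ hx _ ⟨p, hp, hy⟩ => hx ▸ hy ▸ (hθ p hp).trans (h w rfl p hp)

end Image

def collapse {a b : V'} (π : C → V') : {v : V' // v ≠ a ∧ v ≠ b} ⊕ C → V' :=
  Sum.elim Subtype.val π

@[simp] lemma collapse_inl {a b : V'} (π : C → V') (u : {v : V' // v ≠ a ∧ v ≠ b}) :
    collapse π (.inl u) = u.1 := rfl

@[simp] lemma collapse_inr {a b : V'} (π : C → V') (c : C) :
    collapse (a := a) (b := b) π (.inr c) = π c := rfl

lemma parent_eq_of_ne {a b : V'} {π : C → V'} (hπ : ∀ c, π c = a ∨ π c = b) {c d e : C}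
    (hc : π c ≠ π e) (hd : π d ≠ π e) : π c = π d := by
  rcases hπ c with h₁ | h₁ <;> rcases hπ d with h₂ | h₂ <;> rcases hπ e with h₃ | h₃ <;>
    simp_all

lemma val_ne_parent {a b : V'} {π : C → V'} (hπ : ∀ c, π c = a ∨ π c = b)
    (u : {v : V' // v ≠ a ∧ v ≠ b}) (c : C) : u.1 ≠ π c := fun h =>
  (hπ c).elim (fun hc => u.2.1 (h.trans hc)) (fun hc => u.2.2 (h.trans hc))

/-- `G'` with the semiadjacent pair `a, b` replaced by the trigraph `T`, whose vertex `c`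
inherits the adjacencies of `π c` to the other vertices of `G'`. -/
def substitute (G' : Trigraph V') {a b : V'} (hab : G'.SemiAdj a b) (T : Trigraph C)
    (π : C → V') (hπ : ∀ c, π c = a ∨ π c = b) : Trigraph ({v : V' // v ≠ a ∧ v ≠ b} ⊕ C) where
  θ
    | .inr c, .inr d => T.θ c d
    | u, v => G'.θ (collapse π u) (collapse π v)
  range_mem := by
    rintro (u | c) (v | d)
    exacts [G'.range_mem _ _, G'.range_mem _ _, G'.range_mem _ _, T.range_mem c d]
  symm := by
    rintro (u | c) (v | d)
    exacts [G'.symm _ _, G'.symm _ _, G'.symm _ _, T.symm c d]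
  refl_zero := by
    rintro (u | c)
    exacts [G'.refl_zero _, T.refl_zero c]
  semi_matching := by
    have hnz : ∀ (u : {v : V' // v ≠ a ∧ v ≠ b}) c, G'.θ (π c) u.1 ≠ 0 :=
      fun u c => hab.theta_ne_zero (hπ c) u.2.1 u.2.2
    rintro (u | c) (v | d) (w | e) huv huw hvw h0 <;>
      simp only [collapse_inl, collapse_inr, ne_eq, Sum.inl.injEq, Sum.inr.injEq,
        Subtype.ext_iff] at h0 huv huw hvw ⊢
    · exact G'.semi_matching _ _ _ huv huw hvw h0
    · exact G'.semi_matching _ _ _ huv (val_ne_parent hπ u e) (val_ne_parent hπ v e) h0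
    · exact absurd (by rw [G'.symm]; exact h0) (hnz u d)
    · exact absurd (by rw [G'.symm]; exact h0) (hnz u d)
    · exact absurd h0 (hnz v c)
    · exact absurd h0 (hnz v c)
    · exact hnz w c
    · exact T.semi_matching c d e huv huw hvw h0

section Substitute

variable {G' : Trigraph V'} {a b : V'} {hab : G'.SemiAdj a b} {T : Trigraph C} {π : C → V'}
  {hπ : ∀ c, π c = a ∨ π c = b}
local notation "𝓢" => G'.substitute hab T π hπ

@[simp] lemma substitute_θ_inl (u : {v : V' // v ≠ a ∧ v ≠ b}) (w : {v : V' // v ≠ a ∧ v ≠ b} ⊕ C) :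
    (𝓢).θ (.inl u) w = G'.θ u (collapse π w) := by
  cases w <;> rfl

@[simp] lemma substitute_θ_inr_inl (c : C) (v : {v : V' // v ≠ a ∧ v ≠ b}) :
    (𝓢).θ (.inr c) (.inl v) = G'.θ (π c) v := rfl

@[simp] lemma substitute_θ_inr_inr (c d : C) : (𝓢).θ (.inr c) (.inr d) = T.θ c d := rfl

lemma theta_collapse (u v : {v : V' // v ≠ a ∧ v ≠ b} ⊕ C)
    (h : collapse π u ≠ collapse π v) :
    G'.θ (collapse π u) (collapse π v) = (𝓢).θ u v ∨ G'.θ (collapse π u) (collapse π v) = 0 := by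
  rcases u with u | c
  · simp
  rcases v with v | d
  · simp
  right
  simp only [collapse_inr] at h ⊢
  rcases hπ c with hc | hc <;> rcases hπ d with hd | hd <;> rw [hc, hd] at h ⊢
  exacts [absurd rfl h, hab.2, hab.symm.2, absurd rfl h]

lemma Adj.map_collapse {u v : {v : V' // v ≠ a ∧ v ≠ b} ⊕ C} (h : (𝓢).Adj u v)
    (hne : collapse π u ≠ collapse π v) : G'.Adj (collapse π u) (collapse π v) :=
  ⟨hne, (theta_collapse u v hne).elim (fun he => he ▸ h.2) Or.inr⟩

lemma AntiAdj.map_collapse {u v : {v : V' // v ≠ a ∧ v ≠ b} ⊕ C} (h : (𝓢).AntiAdj u v)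
    (hne : collapse π u ≠ collapse π v) : G'.AntiAdj (collapse π u) (collapse π v) :=
  ⟨hne, (theta_collapse u v hne).elim (fun he => he ▸ h.2) Or.inl⟩

lemma not_adj_and_antiAdj_inl {c d : C} (hcd : π c = π d) (u : {v : V' // v ≠ a ∧ v ≠ b}) :
    ¬ ((𝓢).Adj (.inr c) (.inl u) ∧ (𝓢).AntiAdj (.inr d) (.inl u)) := by
  rintro ⟨h₁, h₂⟩
  have h0 := theta_eq_zero_of_adj_of_antiAdj h₁ h₂ (by simp [hcd])
  exact hab.theta_ne_zero (hπ c) u.2.1 u.2.2 h0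

/-- Two consecutive vertices of a square of the substitution that stand for the same vertex
of `G'` force the other two to be vertices of `T` as well. -/
lemma not_isSquare_inr_inr (hT : ∀ c₁ c₂ c₃ c₄, ¬ T.IsSquare c₁ c₂ c₃ c₄) {c d : C}
    (hcd : π c = π d) (w₃ w₄ : {v : V' // v ≠ a ∧ v ≠ b} ⊕ C) :
    ¬ (𝓢).IsSquare (.inr c) (.inr d) w₃ w₄ := by
  intro hsq
  rcases w₃ with u | c₃
  · exact not_adj_and_antiAdj_inl hcd.symm u ⟨hsq.2.2.2.1, hsq.1⟩
  rcases w₄ with u | c₄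
  · exact not_adj_and_antiAdj_inl hcd u ⟨hsq.2.2.2.2.2.symm, hsq.2.1⟩
  exact hT c d c₃ c₄ ((isSquare_map_iff Sum.inr_injective fun _ _ => rfl).1 hsq)

variable {w₁ w₂ w₃ w₄ : {v : V' // v ≠ a ∧ v ≠ b} ⊕ C}

lemma parent_ne_of_isSquare (hT : ∀ c₁ c₂ c₃ c₄, ¬ T.IsSquare c₁ c₂ c₃ c₄)
    (hfib : ∀ x, T.IsStrongClique (π ⁻¹' {x})) (hsq : (𝓢).IsSquare w₁ w₂ w₃ w₄)
    {c d : C} (hc : .inr c ∈ ({w₁, w₂, w₃, w₄} : Set _))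
    (hd : .inr d ∈ ({w₁, w₂, w₃, w₄} : Set _)) (hcd : c ≠ d) : π c ≠ π d := fun h => by
  obtain ⟨z, w, hzw⟩ := hsq.exists_consecutive hc hd (hfib _ h rfl hcd)
  exact not_isSquare_inr_inr hT h z w hzw

lemma IsSquare.map_collapse (hT : ∀ c₁ c₂ c₃ c₄, ¬ T.IsSquare c₁ c₂ c₃ c₄)
    (hfib : ∀ x, T.IsStrongClique (π ⁻¹' {x})) (hsq : (𝓢).IsSquare w₁ w₂ w₃ w₄) :
    G'.IsSquare (collapse π w₁) (collapse π w₂) (collapse π w₃) (collapse π w₄) := by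
  have hinj : Set.InjOn (collapse π) {w₁, w₂, w₃, w₄} := by
    rintro (u | c) hu (v | d) hv h <;> simp only [collapse_inl, collapse_inr] at h
    · exact congrArg _ (Subtype.ext h)
    · exact absurd h (val_ne_parent hπ u d)
    · exact absurd h.symm (val_ne_parent hπ v c)
    · by_contra hne
      exact parent_ne_of_isSquare hT hfib hsq hu hv (fun h' => hne (congrArg _ h')) h
  obtain ⟨h12, h13, h14, h23, h24, h34⟩ := hsq.ne
  exact ⟨hsq.1.map_collapse (hinj.ne (by simp) (by simp) h13),
    hsq.2.1.map_collapse (hinj.ne (by simp) (by simp) h24),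
    hsq.2.2.1.map_collapse (hinj.ne (by simp) (by simp) h12),
    hsq.2.2.2.1.map_collapse (hinj.ne (by simp) (by simp) h23),
    hsq.2.2.2.2.1.map_collapse (hinj.ne (by simp) (by simp) h34),
    hsq.2.2.2.2.2.map_collapse (hinj.ne (by simp) (by simp) h14.symm)⟩

variable {P Q : Set ({v : V' // v ≠ a ∧ v ≠ b} ⊕ C)}

lemma SquareConnected.exists_antiAdj_inr (hfib : ∀ x, T.IsStrongClique (π ⁻¹' {x}))
    (hsc : (𝓢).SquareConnected P Q) {c d : C} (hc : .inr c ∈ P) (hd : .inr d ∈ Q)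
    (hcd : π c = π d) : ∃ e, .inr e ∈ Q ∧ π e ≠ π c ∧ (𝓢).AntiAdj (.inr c) (.inr e) := by
  obtain ⟨-, q, hq, hanti⟩ := hsc.exists_adj_antiAdj hc
  have hPQ : ∀ e, .inr e ∈ Q → c ≠ e := fun e he h =>
    Set.disjoint_left.1 hsc.1.2.2.1 hc (h ▸ he)
  have hqd : q ≠ .inr d := by
    rintro rfl
    exact hanti.theta_ne_one (hfib _ hcd rfl (hPQ d hd))
  have hdq : (𝓢).StrongAdj (.inr d) q := hsc.1.2.2.2.2.1 hd hq hqd.symm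
  rcases q with u | e
  · refine absurd ?_ hanti.theta_ne_one
    simpa [StrongAdj, hcd] using hdq
  · exact ⟨e, hq, fun he => hanti.theta_ne_one (hfib _ he.symm rfl (hPQ e hq)), hanti⟩

/-- Otherwise the vertices of the other fiber separating `c` and `d` give a square through two
vertices of one fiber. -/
lemma SquareConnected.parent_ne (hT : ∀ c₁ c₂ c₃ c₄, ¬ T.IsSquare c₁ c₂ c₃ c₄)
    (hfib : ∀ x, T.IsStrongClique (π ⁻¹' {x})) (hsc : (𝓢).SquareConnected P Q)
    {c d : C} (hc : .inr c ∈ P) (hd : .inr d ∈ Q) : π c ≠ π d := by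
  intro hcd
  obtain ⟨e, he, hec, hce⟩ := hsc.exists_antiAdj_inr hfib hc hd hcd
  obtain ⟨e', he', he'd, hde'⟩ := hsc.symm.exists_antiAdj_inr hfib hd hc hcd.symm
  have hne : ∀ {x y : C}, π x ≠ π y → (Sum.inr x : {v : V' // v ≠ a ∧ v ≠ b} ⊕ C) ≠ .inr y :=
    fun h h' => h (congrArg π (Sum.inr_injective h'))
  have hdisj : ∀ {x y : C}, .inr x ∈ P → .inr y ∈ Q → x ≠ y := fun hx hy h =>
    Set.disjoint_left.1 hsc.1.2.2.1 hx (h ▸ hy)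
  have hee' : π e = π e' := parent_eq_of_ne hπ hec (hcd ▸ he'd)
  refine not_isSquare_inr_inr hT hcd (.inr e) (.inr e') ⟨hce, hde', ?_, ?_, ?_, ?_⟩
  · exact ⟨fun h => hdisj hc hd (Sum.inr_injective h), Or.inl (hfib _ hcd rfl (hdisj hc hd))⟩
  · exact hsc.1.2.2.2.2.1.adj hd he (hne fun h => hec (hcd.trans h).symm)
  · exact ⟨fun h => hdisj he' he (Sum.inr_injective h).symm,
      Or.inl (hfib _ hee' rfl (hdisj he' he).symm)⟩
  · exact hsc.1.2.2.2.1.adj he' hc (hne (hcd ▸ he'd))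

lemma SquareConnected.mem_of_parent_eq (hsc : (𝓢).SquareConnected P Q)
    (hQ : ∀ d, .inr d ∉ Q) {c d : C} (hc : .inr c ∈ P) (hcd : π d = π c) : .inr d ∈ P :=
  hsc.mem_of_theta_eq hc (hQ d) fun q hq => by
    rcases q with u | e
    · simp [hcd]
    · exact absurd hq (hQ e)

/-- If `P` contains the fiber of `π c` and misses the other fiber, homogeneity of the other fiber
to `P` makes every pair of `T` across the fibers have the value `θ(·, u)` of the other end of the
semiedge, which is `1` or `-1`. -/
lemma SquareConnected.inl_notMem (hmix : T.Mixed (π ⁻¹' {a}) (π ⁻¹' {b}))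
    (hsc : (𝓢).SquareConnected P Q) (hQ : ∀ d, .inr d ∉ Q) {c : C} (hc : .inr c ∈ P)
    (hother : ∀ d, π d ≠ π c → .inr d ∉ P) (u : {v : V' // v ≠ a ∧ v ≠ b}) : .inl u ∉ P := by
  intro hu
  have hval : ∀ e f, π e = π c → π f ≠ π c → T.θ f e = G'.θ (π f) u := by
    intro e f he hf
    have hout : .inr f ∉ P ∪ Q := by
      rintro (h | h)
      exacts [hother f hf h, hQ f h]
    have he' := hsc.mem_of_parent_eq hQ hc he
    rcases (hsc.1.2.2.2.2.2.2 _ hout).1 with h | h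
    · exact (h _ rfl _ he').trans (h _ rfl _ hu).symm
    · exact (h _ rfl _ he').trans (h _ rfl _ hu).symm
  obtain ⟨d₀, hd₀⟩ : ∃ d₀, π d₀ ≠ π c := by
    rcases hπ c with h | h
    exacts [(hmix.nonempty_right).imp fun d hd => hd.trans_ne (h ▸ hab.1.symm),
      (hmix.nonempty_left).imp fun d hd => hd.trans_ne (h ▸ hab.1)]
  have hacross : ∀ e ∈ π ⁻¹' {a}, ∀ f ∈ π ⁻¹' {b}, T.θ e f = G'.θ (π d₀) u := by
    intro e (he : π e = a) f (hf : π f = b)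
    have hef : π e ≠ π f := he ▸ hf ▸ hab.1
    by_cases hec : π e = π c
    · have hfc : π f ≠ π c := fun h => hef (hec.trans h.symm)
      rw [T.symm, hval e f hec hfc, parent_eq_of_ne hπ hfc hd₀]
    · rw [hval f e (parent_eq_of_ne hπ hef.symm fun h => hec h.symm) hec,
        parent_eq_of_ne hπ hec hd₀]
  rcases G'.range_mem (π d₀) u with h | h | h
  · exact hmix.1 fun e he f hf => (hacross e he f hf).trans h
  · exact hab.theta_ne_zero (hπ d₀) u.2.1 u.2.2 h
  · exact hmix.2 fun e he f hf => (hacross e he f hf).trans h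

/-- If `Q` has no vertex of `T`, each fiber meeting `P` lies in `P`. Both fibers cannot, as they
are mixed, and one alone contains `P` by `inl_notMem`, against a square through two vertices
of `P`. -/
lemma SquareConnected.exists_inr_mem (hT : ∀ c₁ c₂ c₃ c₄, ¬ T.IsSquare c₁ c₂ c₃ c₄)
    (hfib : ∀ x, T.IsStrongClique (π ⁻¹' {x})) (hmix : T.Mixed (π ⁻¹' {a}) (π ⁻¹' {b}))
    (hsc : (𝓢).SquareConnected P Q) (hP : ∃ c, .inr c ∈ P) : ∃ d, .inr d ∈ Q := by
  by_contra! hQ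
  obtain ⟨c, hc⟩ := hP
  by_cases hother : ∃ d, π d ≠ π c ∧ .inr d ∈ P
  · obtain ⟨d, hdc, hd⟩ := hother
    have hall : ∀ e, .inr e ∈ P := fun e => by
      by_cases he : π e = π c
      · exact hsc.mem_of_parent_eq hQ hc he
      · exact hsc.mem_of_parent_eq hQ hd (parent_eq_of_ne hπ he hdc)
    refine hmix.1 fun e (he : π e = a) f (hf : π f = b) => hsc.1.2.2.2.1 (hall e) (hall f) ?_
    exact fun h => hab.1 (he ▸ hf ▸ congrArg π (Sum.inr_injective h))
  simp only [not_exists, not_and] at hother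
  obtain ⟨v₁, v₂, v₃, v₄, hsq, hsub⟩ := hsc.hasSquareIn
  obtain ⟨p, hp, p', hp', hpp', hpP, hp'P⟩ := exists_two_mem_of_isSquare hsc.1.2.2.2.2.1 hsq hsub
  rcases p with u | e
  · exact hsc.inl_notMem hmix hQ hc hother u hpP
  rcases p' with u | e'
  · exact hsc.inl_notMem hmix hQ hc hother u hp'P
  exact parent_ne_of_isSquare hT hfib hsq hp hp' (fun h => hpp' (congrArg _ h))
    ((not_not.1 fun h => hother e h hpP).trans (not_not.1 fun h => hother e' h hp'P).symm)

lemma isStrongClique_image_collapse (hP : (𝓢).IsStrongClique P)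
    (hPP : ∀ c d, .inr c ∈ P → .inr d ∈ P → π c = π d) :
    G'.IsStrongClique (collapse π '' P) := by
  rintro _ ⟨p, hp, rfl⟩ _ ⟨p', hp', rfl⟩ hne
  have h := hP hp hp' (ne_of_apply_ne _ hne)
  rcases p with u | c
  · simpa [StrongAdj] using h
  rcases p' with v | d
  · simpa [StrongAdj] using h
  exact absurd (hPP c d hp hp') hne

lemma disjoint_image_collapse (hπ : ∀ c, π c = a ∨ π c = b) (hd : Disjoint P Q)
    (hPQ : ∀ c d, .inr c ∈ P → .inr d ∈ Q → π c ≠ π d) :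
    Disjoint (collapse π '' P) (collapse π '' Q) := by
  rw [Set.disjoint_left]
  rintro _ ⟨p, hp, rfl⟩ ⟨q, hq, hqp⟩
  rcases p with u | c <;> rcases q with v | d <;> simp only [collapse_inl, collapse_inr] at hqp
  · exact Set.disjoint_left.1 hd hp (Subtype.ext hqp ▸ hq)
  · exact val_ne_parent hπ u d hqp.symm
  · exact val_ne_parent hπ v c hqp
  · exact hPQ c d hp hq hqp.symm

/-- `v` inherits the homogeneity of a vertex standing for it; by `hfibers` this is not a vertex
of `T` facing vertices of `T` in `P ∪ Q`. -/
lemma homogeneous_image_collapse (hsurj : Surjective (collapse (a := a) (b := b) π))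
    (hhom : ∀ w ∉ P ∪ Q, ((𝓢).StronglyComplete {w} P ∨ (𝓢).StronglyAnticomplete {w} P) ∧
      ((𝓢).StronglyComplete {w} Q ∨ (𝓢).StronglyAnticomplete {w} Q))
    (hfibers : (∃ d, .inr d ∈ P ∪ Q) → ∀ c, π c ∈ collapse π '' (P ∪ Q))
    (v : V') (hv : v ∉ collapse π '' P ∪ collapse π '' Q) :
    (G'.StronglyComplete {v} (collapse π '' P) ∨ G'.StronglyAnticomplete {v} (collapse π '' P)) ∧
    (G'.StronglyComplete {v} (collapse π '' Q) ∨ G'.StronglyAnticomplete {v} (collapse π '' Q)) := by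
  obtain ⟨w, rfl⟩ := hsurj v
  replace hv : collapse π w ∉ collapse π '' (P ∪ Q) := by rwa [Set.image_union]
  have hθ : ∀ p ∈ P ∪ Q, G'.θ (collapse π w) (collapse π p) = (𝓢).θ w p := by
    intro p hp
    rcases w with u | c
    · simp
    rcases p with u | d
    · simp
    · exact absurd (hfibers ⟨d, hp⟩ c) hv
  have hw := hhom w fun h => hv ⟨w, h, rfl⟩
  exact ⟨stronglyComplete_or_anticomplete_image _ (fun p hp => hθ p (Or.inl hp)) hw.1,
    stronglyComplete_or_anticomplete_image _ (fun p hp => hθ p (Or.inr hp)) hw.2⟩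

lemma SquareConnected.map_collapse (hT : ∀ c₁ c₂ c₃ c₄, ¬ T.IsSquare c₁ c₂ c₃ c₄)
    (hfib : ∀ x, T.IsStrongClique (π ⁻¹' {x}))
    (hsurj : Surjective (collapse (a := a) (b := b) π)) (hsc : (𝓢).SquareConnected P Q)
    (hiff : (∃ c, .inr c ∈ P) ↔ ∃ c, .inr c ∈ Q) :
    G'.SquareConnected (collapse π '' P) (collapse π '' Q) := by
  have hPQ : ∀ c d, .inr c ∈ P → .inr d ∈ Q → π c ≠ π d := fun _ _ => hsc.parent_ne hT hfib
  have hPP : ∀ c d, .inr c ∈ P → .inr d ∈ P → π c = π d := fun c d hc hd =>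
    have ⟨e, he⟩ := hiff.1 ⟨c, hc⟩
    parent_eq_of_ne hπ (hPQ c e hc he) (hPQ d e hd he)
  have hQQ : ∀ c d, .inr c ∈ Q → .inr d ∈ Q → π c = π d := fun c d hc hd =>
    have ⟨e, he⟩ := hiff.2 ⟨c, hc⟩
    parent_eq_of_ne hπ (hPQ e c he hc).symm (hPQ e d he hd).symm
  have hfibers : (∃ d, .inr d ∈ P ∪ Q) → ∀ c, π c ∈ collapse π '' (P ∪ Q) := by
    rintro ⟨d, hd⟩ c
    obtain ⟨d₁, hd₁⟩ : ∃ d₁, .inr d₁ ∈ P := by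
      rcases hd with hd | hd
      exacts [⟨d, hd⟩, hiff.2 ⟨d, hd⟩]
    obtain ⟨d₂, hd₂⟩ := hiff.1 ⟨d₁, hd₁⟩
    by_cases h : π c = π d₁
    · exact ⟨.inr d₁, Or.inl hd₁, h.symm⟩
    · exact ⟨.inr d₂, Or.inr hd₂, (parent_eq_of_ne hπ h (hPQ d₁ d₂ hd₁ hd₂).symm).symm⟩
  have hsq : G'.HasSquareIn (collapse π '' P ∪ collapse π '' Q) := by
    obtain ⟨v₁, v₂, v₃, v₄, hsq, hsub⟩ := hsc.hasSquareIn
    refine ⟨_, _, _, _, hsq.map_collapse hT hfib, ?_⟩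
    rw [← Set.image_union]
    exact (Set.image_mono hsub).trans' (by simp [Set.image_insert_eq])
  exact hsc.image (fun _ _ _ _ h => h.map_collapse hT hfib)
    ⟨hsc.1.1.image _, hsc.1.2.1.image _, disjoint_image_collapse hπ hsc.1.2.2.1 hPQ,
      isStrongClique_image_collapse hsc.1.2.2.2.1 hPP,
      isStrongClique_image_collapse hsc.1.2.2.2.2.1 hQQ, not_singletons_of_hasSquareIn hsq,
      homogeneous_image_collapse hsurj hsc.1.2.2.2.2.2.2 hfibers⟩

lemma collapse_surjective (ha : (π ⁻¹' {a}).Nonempty)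
    (hb : (π ⁻¹' {b}).Nonempty) : Surjective (collapse (a := a) (b := b) π) := by
  intro v
  by_cases hva : v = a
  · obtain ⟨c, hc⟩ := ha
    exact ⟨.inr c, hc.trans hva.symm⟩
  by_cases hvb : v = b
  · obtain ⟨c, hc⟩ := hb
    exact ⟨.inr c, hc.trans hvb.symm⟩
  exact ⟨.inl ⟨v, hva, hvb⟩, rfl⟩

/-- A square-connected pair of the substitution has vertices of `T` on both sides or on neither,
and then it collapses onto a square-connected pair of `G'`. -/
theorem laminar_substitute (hlam : G'.Laminar) (hT : ∀ c₁ c₂ c₃ c₄, ¬ T.IsSquare c₁ c₂ c₃ c₄)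
    (hfib : ∀ x, T.IsStrongClique (π ⁻¹' {x})) (hmix : T.Mixed (π ⁻¹' {a}) (π ⁻¹' {b})) :
    (𝓢).Laminar := by
  rintro ⟨P, Q, hsc⟩
  refine hlam ⟨_, _, hsc.map_collapse hT hfib
    (collapse_surjective hmix.nonempty_left hmix.nonempty_right) ?_⟩
  exact ⟨hsc.exists_inr_mem hT hfib hmix, hsc.symm.exists_inr_mem hT hfib hmix⟩

end Substitute

open Classical in
noncomputable def classθ (G : Trigraph V) (K : C → Set V) (c d : C) : ℤ :=
  if c = d then 0 else if G.StronglyComplete (K c) (K d) then 1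
    else if G.StronglyAnticomplete (K c) (K d) then -1 else 0

lemma classθ_symm (K : C → Set V) (c d : C) : classθ G K c d = classθ G K d c := by
  by_cases h : c = d
  · rw [h]
  · simp only [classθ, h, Ne.symm h, if_false]
    rw [stronglyComplete_comm, stronglyAnticomplete_comm]

lemma realizes_classθ (K : C → Set V) {c d : C} (h : c ≠ d) :
    G.Realizes (classθ G K c d) (K c) (K d) := by
  simp only [Realizes, Mixed, classθ, if_neg h]
  split_ifs <;> simp_all

lemma classθ_eq_zero_iff (K : C → Set V) {c d : C} (h : c ≠ d) :
    classθ G K c d = 0 ↔ G.Mixed (K c) (K d) := by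
  simp only [Mixed, classθ, if_neg h]
  split_ifs <;> simp_all

lemma classθ_singleton {S : Set V} (c d : S) : classθ G (fun c : S => {c.1}) c d = G.θ c d := by
  by_cases h : c = d
  · simp [classθ, h, G.refl_zero]
  · simp only [classθ, h, if_false, StronglyComplete, StronglyAnticomplete, StrongAdj,
      StrongAntiAdj, Set.mem_singleton_iff, forall_eq]
    rcases G.range_mem c d with h' | h' | h' <;> simp [h']

def MixedMatching (G : Trigraph V) (K : C → Set V) : Prop :=
  ∀ c d e, c ≠ d → c ≠ e → d ≠ e → G.Mixed (K c) (K d) → ¬ G.Mixed (K c) (K e)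

noncomputable def quotient (G : Trigraph V) (K : C → Set V) (hK : G.MixedMatching K) :
    Trigraph C where
  θ := classθ G K
  range_mem c d := by
    unfold classθ
    split_ifs <;> simp
  symm := classθ_symm K
  refl_zero _ := if_pos rfl
  semi_matching c d e hcd hce hde h₁ h₂ :=
    hK c d e hcd hce hde ((classθ_eq_zero_iff K hcd).1 h₁) ((classθ_eq_zero_iff K hce).1 h₂)

lemma mixedMatching_fin_three {K : Fin 3 → Set V} (h : ∀ i, i ≠ 0 → ¬ G.Mixed (K 0) (K i)) :
    G.MixedMatching K := by
  intro c d e hcd hce hde hd he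
  have : c = 0 ∨ d = 0 ∨ e = 0 := by omega
  rcases this with rfl | rfl | rfl
  exacts [h d hcd.symm hd, h c hcd hd.symm, h c hce he.symm]

lemma pairwise_disjoint_split {A B : Set V} {x : V} (hAB : Disjoint A B) (hx : x ∈ A) :
    Pairwise (Disjoint on ![{x}, A \ {x}, B]) := by
  have h₁ : Disjoint {x} (A \ {x}) := Set.disjoint_sdiff_right
  have h₂ : Disjoint {x} B := Set.disjoint_singleton_left.2 (Set.disjoint_left.1 hAB hx)
  have h₃ : Disjoint (A \ {x}) B := hAB.mono_left Set.sdiff_subset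
  intro i j hij
  fin_cases i <;> fin_cases j
  all_goals first
    | exact absurd rfl hij
    | exact h₁ | exact h₂ | exact h₃ | exact h₁.symm | exact h₂.symm | exact h₃.symm

lemma union_subset_iUnion_split (A B : Set V) (x : V) : A ∪ B ⊆ ⋃ i, ![{x}, A \ {x}, B] i := by
  rintro u (hu | hu)
  · by_cases hux : u = x
    · exact Set.mem_iUnion.2 ⟨0, hux⟩
    · exact Set.mem_iUnion.2 ⟨1, hu, hux⟩
  · exact Set.mem_iUnion.2 ⟨2, hu⟩

section Refinement

variable {G' : Trigraph V'} {I : V' → Set V} {a b : V'} {π : C → V'} {K : C → Set V}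

theorem IsThickening.substitute (hI : G.IsThickening G' I) (hab : G'.SemiAdj a b)
    (hπ : ∀ c, π c = a ∨ π c = b) (hK : G.MixedMatching K) (hKne : ∀ c, (K c).Nonempty)
    (hKsub : ∀ c, K c ⊆ I (π c)) (hKdisj : Pairwise (Disjoint on K))
    (hKcover : I a ∪ I b ⊆ ⋃ c, K c) :
    G.IsThickening (G'.substitute hab (G.quotient K hK) π hπ) (Sum.elim (fun v => I v.1) K) := by
  have hreal : ∀ u v, u ≠ v → G.Realizes ((G'.substitute hab (G.quotient K hK) π hπ).θ u v)
      (Sum.elim (fun v => I v.1) K u) (Sum.elim (fun v => I v.1) K v) := by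
    rintro (u | c) (v | d) huv
    · exact hI.realizes fun h => huv (congrArg _ (Subtype.ext h))
    · refine (hI.realizes (val_ne_parent hπ u d)).mono ?_ subset_rfl (hKsub d)
      rw [G'.symm]
      exact hab.theta_ne_zero (hπ d) u.2.1 u.2.2
    · exact (hI.realizes (val_ne_parent hπ v c).symm).mono
        (hab.theta_ne_zero (hπ c) v.2.1 v.2.2) (hKsub c) subset_rfl
    · exact realizes_classθ K fun h => huv (congrArg _ h)
  refine ⟨?_, ?_, ?_, fun u v huv => ⟨(hreal u v huv).1, (hreal u v huv).2.1,
    fun h => (hreal u v huv).2.2 h.2⟩⟩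
  · rintro (v | c)
    · exact hI.1 v
    · exact ⟨hKne c, Set.Pairwise.mono (hKsub c) (hI.1 (π c)).2⟩
  · rintro (u | c) (v | d) huv <;> simp only [Sum.elim_inl, Sum.elim_inr]
    · exact hI.2.1 _ _ fun h => huv (congrArg _ (Subtype.ext h))
    · exact (hI.2.1 _ _ (val_ne_parent hπ u d)).mono_right (hKsub d)
    · exact (hI.2.1 _ _ (val_ne_parent hπ v c).symm).mono_left (hKsub c)
    · exact hKdisj fun h => huv (congrArg _ h)
  · refine Set.eq_univ_of_forall fun x => ?_
    obtain ⟨u, hx⟩ := Set.mem_iUnion.1 (hI.2.2.1.symm ▸ Set.mem_univ x)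
    by_cases hu : u = a ∨ u = b
    · obtain ⟨c, hc⟩ := Set.mem_iUnion.1 (hKcover (hu.elim (fun h => Or.inl (h ▸ hx))
        (fun h => Or.inr (h ▸ hx))))
      exact Set.mem_iUnion.2 ⟨.inr c, hc⟩
    · push Not at hu
      exact Set.mem_iUnion.2 ⟨.inl ⟨u, hu⟩, hx⟩

lemma card_substitute [Finite V'] [Finite C] (hab : a ≠ b) :
    Nat.card ({v : V' // v ≠ a ∧ v ≠ b} ⊕ C) + 2 = Nat.card V' + Nat.card C := by
  have h₁ : Nat.card {v : V' // v ≠ a ∧ v ≠ b} = (({a, b} : Set V')ᶜ).ncard := by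
    rw [← Nat.card_coe_set_eq]
    exact Nat.card_congr (Equiv.subtypeEquivRight fun v => by simp)
  have h₂ := Set.ncard_add_ncard_compl ({a, b} : Set V')
  rw [Set.ncard_pair hab] at h₂
  rw [Nat.card_sum, h₁]
  omega

/-- The refinement is again a laminar antithickening of `G`, with `|V'| - 2 + |C|` vertices. -/
theorem OptimalAntithickening.card_le_two [Finite V'] [Finite C]
    (hopt : G.OptimalAntithickening G' I) (hab : G'.SemiAdj a b)
    (hπ : ∀ c, π c = a ∨ π c = b) (hK : G.MixedMatching K) (hKne : ∀ c, (K c).Nonempty)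
    (hKsub : ∀ c, K c ⊆ I (π c)) (hKdisj : Pairwise (Disjoint on K))
    (hKcover : I a ∪ I b ⊆ ⋃ c, K c)
    (hT : ∀ c₁ c₂ c₃ c₄, ¬ (G.quotient K hK).IsSquare c₁ c₂ c₃ c₄) : Nat.card C ≤ 2 := by
  have hmix := hopt.1.mixed hab
  have hparent : ∀ {c x u}, u ∈ K c → u ∈ I x → π c = x := fun {c x u} hc hx => by
    by_contra h
    exact Set.disjoint_left.1 (hopt.1.2.1 _ _ h) (hKsub c hc) hx
  have hpair : ∀ u ∈ I a, ∀ v ∈ I b, ∃ c ∈ π ⁻¹' {a}, ∃ d ∈ π ⁻¹' {b}, u ∈ K c ∧ v ∈ K d := by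
    intro u hu v hv
    obtain ⟨c, hc⟩ := Set.mem_iUnion.1 (hKcover (Or.inl hu))
    obtain ⟨d, hd⟩ := Set.mem_iUnion.1 (hKcover (Or.inr hv))
    exact ⟨c, hparent hc hu, d, hparent hd hv, hc, hd⟩
  have hfib : ∀ x, (G.quotient K hK).IsStrongClique (π ⁻¹' {x}) := by
    intro x c (hc : π c = x) d (hd : π d = x) hcd
    have hsc : G.StronglyComplete (K c) (K d) := fun u hu v hv =>
      (hopt.1.1 x).2 (hc ▸ hKsub c hu) (hd ▸ hKsub d hv)
        fun huv => Set.disjoint_left.1 (hKdisj hcd) hu (huv ▸ hv)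
    show classθ G K c d = 1
    simp [classθ, hcd, hsc]
  have hmixT : (G.quotient K hK).Mixed (π ⁻¹' {a}) (π ⁻¹' {b}) := by
    have hne : ∀ c ∈ π ⁻¹' {a}, ∀ d ∈ π ⁻¹' {b}, c ≠ d :=
      fun c (hc : π c = a) d (hd : π d = b) h => hab.1 (hc ▸ hd ▸ congrArg π h)
    refine ⟨fun h => hmix.1 fun u hu v hv => ?_, fun h => hmix.2 fun u hu v hv => ?_⟩
    · obtain ⟨c, hc, d, hd, huc, hvd⟩ := hpair u hu v hv
      exact (realizes_classθ K (hne c hc d hd)).1 (h c hc d hd) u huc v hvd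
    · obtain ⟨c, hc, d, hd, huc, hvd⟩ := hpair u hu v hv
      exact (realizes_classθ K (hne c hc d hd)).2.1 (h c hc d hd) u huc v hvd
  have hlam : (G'.substitute hab (G.quotient K hK) π hπ).Laminar :=
    laminar_substitute hopt.2.1 hT hfib hmixT
  have hle := hopt.2.2 _ _ _ (hopt.1.substitute hab hπ hK hKne hKsub hKdisj hKcover) hlam
  have := card_substitute (C := C) hab.1
  omega

lemma IsThickening.hposc (hI : G.IsThickening G' I) (hab : G'.SemiAdj a b)
    (hns : ¬ ∃ x y, I a = {x} ∧ I b = {y}) : G.HPOSC (I a) (I b) := by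
  refine ⟨(hI.1 a).1, (hI.1 b).1, hI.2.1 a b hab.1, (hI.1 a).2, (hI.1 b).2, hns, fun v hv => ?_⟩
  obtain ⟨w, hvw⟩ := Set.mem_iUnion.1 (hI.2.2.1.symm ▸ Set.mem_univ v)
  have hwa : w ≠ a := fun h => hv (Or.inl (h ▸ hvw))
  have hwb : w ≠ b := fun h => hv (Or.inr (h ▸ hvw))
  have hhom : ∀ x, x = a ∨ x = b →
      G.StronglyComplete {v} (I x) ∨ G.StronglyAnticomplete {v} (I x) := by
    intro x hx
    have hz : G'.θ w x ≠ 0 := by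
      rw [G'.symm]
      exact hab.theta_ne_zero hx hwa hwb
    have hr := (hI.realizes fun h => hx.elim (fun h' => hwa (h.trans h'))
      (fun h' => hwb (h.trans h'))).mono hz (Set.singleton_subset_iff.2 hvw) subset_rfl
    rcases G'.range_mem w x with h | h | h
    exacts [Or.inl (hr.1 h), absurd h hz, Or.inr (hr.2.1 h)]
  exact ⟨hhom a (Or.inl rfl), hhom b (Or.inr rfl)⟩

/-- Otherwise refining `a` and `b` into the single vertices of `I a` and `I b` would give a
laminar antithickening with more vertices. -/
lemma OptimalAntithickening.hasSquareIn [Finite V] [Finite V']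
    (hopt : G.OptimalAntithickening G' I) (hab : G'.SemiAdj a b)
    (hns : ¬ ∃ x y, I a = {x} ∧ I b = {y}) : G.HasSquareIn (I a ∪ I b) := by
  classical
  by_contra hsq
  have hdisj := hopt.1.2.1 a b hab.1
  have hK : G.MixedMatching (fun c : ↥(I a ∪ I b) => {c.1}) :=
    fun c d e hcd hce hde h₁ h₂ => G.semi_matching c d e (Subtype.coe_ne_coe.2 hcd)
      (Subtype.coe_ne_coe.2 hce) (Subtype.coe_ne_coe.2 hde) (mixed_singleton_iff.1 h₁)
      (mixed_singleton_iff.1 h₂)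
  have hcard := hopt.card_le_two hab (π := fun c : ↥(I a ∪ I b) => if c.1 ∈ I a then a else b)
    (fun c => by split_ifs <;> simp) hK (fun c => Set.singleton_nonempty _)
    (fun c => by
      rcases c.2 with h | h
      · simp [h]
      · simp [h, Set.disjoint_right.1 hdisj h])
    (fun c d hcd => Set.disjoint_singleton.2 (Subtype.coe_ne_coe.2 hcd))
    (fun x hx => Set.mem_iUnion.2 ⟨⟨x, hx⟩, rfl⟩)
    (fun c₁ c₂ c₃ c₄ h => hsq ⟨_, _, _, _, (isSquare_map_iff Subtype.val_injective
      fun u v => (classθ_singleton u v).symm).2 h, by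
        rintro _ (rfl | rfl | rfl | rfl)
        exacts [c₁.2, c₂.2, c₃.2, c₄.2]⟩)
  rw [Nat.card_coe_set_eq, Set.ncard_union_eq hdisj] at hcard
  have ha := (Set.ncard_pos (Set.toFinite _)).2 (hopt.1.1 a).1
  have hb := (Set.ncard_pos (Set.toFinite _)).2 (hopt.1.1 b).1
  exact hns (by
    obtain ⟨x, hx⟩ := Set.ncard_eq_one.1 (show (I a).ncard = 1 by omega)
    obtain ⟨y, hy⟩ := Set.ncard_eq_one.1 (show (I b).ncard = 1 by omega)
    exact ⟨x, y, hx, hy⟩)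

/-- Otherwise splitting `I a` into `{x}` and the rest would give a laminar antithickening
with more vertices. -/
lemma OptimalAntithickening.mixed_singleton [Finite V']
    (hopt : G.OptimalAntithickening G' I) (hab : G'.SemiAdj a b) {x : V} (hx : x ∈ I a) :
    G.Mixed {x} (I b) := by
  by_contra hx'
  have hdisj := hopt.1.2.1 a b hab.1
  have hrest : (I a \ {x}).Nonempty := by
    rw [Set.nonempty_iff_ne_empty, Ne, Set.sdiff_eq_empty]
    intro h
    exact hx' ((Set.Subset.antisymm h (Set.singleton_subset_iff.2 hx)) ▸ hopt.1.mixed hab)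
  have hcard := hopt.card_le_two hab (π := ![a, a, b]) (K := ![{x}, I a \ {x}, I b])
    (by simp [Fin.forall_fin_succ])
    (mixedMatching_fin_three fun i hi => by
      fin_cases i
      · exact absurd rfl hi
      · exact fun h => h.1 fun u hu v hv => (hopt.1.1 a).2 (hu ▸ hx) hv.1 (hu ▸ Ne.symm hv.2)
      · exact hx')
    (by simp [Fin.forall_fin_succ, hrest, (hopt.1.1 b).1])
    (by simp [Fin.forall_fin_succ, hx])
    (pairwise_disjoint_split hdisj hx) (union_subset_iUnion_split _ _ x)
    (fun c₁ c₂ c₃ c₄ h => by simpa using h.four_le_card)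
  simp at hcard

end Refinement

end Trigraph

theorem semiedge_image_deletionMinimal_general {V V' : Type} [Fintype V] [Fintype V']
    (G : Trigraph V)
    (G' : Trigraph V') (I : V' → Set V) (hopt : G.OptimalAntithickening G' I)
    (a b : V') (hab : G'.SemiAdj a b) :
    (∃ x y : V, I a = {x} ∧ I b = {y} ∧ G.SemiAdj x y) ∨
      G.DeletionMinimal (I a) (I b) := by
  by_cases hsing : ∃ x y, I a = {x} ∧ I b = {y}
  · obtain ⟨x, y, hx, hy⟩ := hsing
    have hmix := hopt.1.mixed hab
    rw [hx, hy] at hmix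
    have hxy : x ≠ y :=
      (hopt.1.2.1 a b hab.1).ne_of_mem (hx ▸ Set.mem_singleton x) (hy ▸ Set.mem_singleton y)
    exact Or.inl ⟨x, y, hx, hy, hxy, Trigraph.mixed_singleton_iff.1 hmix⟩
  · exact Or.inr ⟨hopt.1.hposc hab hsing, hopt.hasSquareIn hab hsing,
      fun x hx => hopt.mixed_singleton hab hx, fun y hy => hopt.mixed_singleton hab.symm hy⟩

/-- In an optimal antithickening of a connected non-degenerate trigraph,
the preimage of any semiedge is either a semiedge of G or a deletion-minimal homogeneous
pair of strong cliques of G. -/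
theorem semiedge_image_deletionMinimal {V V' : Type} [Fintype V] [Fintype V']
    (G : Trigraph V) (hconn : G.Connected) (hnd : G.NonDegenerate)
    (G' : Trigraph V') (I : V' → Set V) (hopt : G.OptimalAntithickening G' I)
    (a b : V') (hab : G'.SemiAdj a b) :
    (∃ x y : V, I a = {x} ∧ I b = {y} ∧ G.SemiAdj x y) ∨
      G.DeletionMinimal (I a) (I b) :=
  semiedge_image_deletionMinimal_general G G' I hopt a b hab
end

section
/- Let (A, B) be a homogeneous pair of strong cliques in a trigraph G, and let (A1, B1) and (A2, B2) be disjoint square-connected homogeneous pairs of strong cliques in G (i.e., A1, B1, A2, B2 are pairwise disjoint) such that A1 ∪ A2 ⊆ A and B1 ∪ B2 ⊆ B. Suppose no square of G contained in A ∪ B intersects both A1 ∪ B1 and A2 ∪ B2. Then A2 is strongly complete or strongly anticomplete to B1, B2 is strongly complete or strongly anticomplete to A1, and A2 and B2 are not both strongly complete (to B1 and A1 respectively). -/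
namespace Trigraph

variable {V : Type}

lemma adj_symm' (G : Trigraph V) {u v : V} (h : G.Adj u v) : G.Adj v u :=
  ⟨h.1.symm, by rw [G.symm v u]; exact h.2⟩

lemma antiAdj_symm' (G : Trigraph V) {u v : V} (h : G.AntiAdj u v) : G.AntiAdj v u :=
  ⟨h.1.symm, by rw [G.symm v u]; exact h.2⟩

lemma isSquare_rot (G : Trigraph V) {v1 v2 v3 v4 : V} (h : G.IsSquare v1 v2 v3 v4) :
    G.IsSquare v2 v3 v4 v1 := by
  obtain ⟨h13, h24, h12, h23, h34, h41⟩ := h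
  exact ⟨h24, G.antiAdj_symm' h13, h23, h34, h41, h12⟩

lemma mk_square_core (G : Trigraph V) {A B : Set V}
    (hAcl : G.IsStrongClique A) (hBcl : G.IsStrongClique B)
    {u b' b'' x : V} (huA : u ∈ A) (hb'B : b' ∈ B) (hb''B : b'' ∈ B) (hxA : x ∈ A)
    (hux : u ≠ x)
    (hanti : G.AntiAdj u b') (hadj : G.Adj u b'')
    (hc : G.θ x b' = 1) (ha : G.θ x b'' = -1) :
    G.IsSquare u x b' b'' := by
  have hxb' : x ≠ b' := fun h => by rw [h, G.refl_zero] at hc; norm_num at hc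
  have hxb'' : x ≠ b'' := fun h => by rw [h, G.refl_zero] at ha; norm_num at ha
  have hbb : b' ≠ b'' := fun h => by rw [h, ha] at hc; norm_num at hc
  exact ⟨hanti, ⟨hxb'', Or.inr ha⟩, ⟨hux, Or.inl (hAcl huA hxA hux)⟩,
    ⟨hxb', Or.inl hc⟩, ⟨hbb, Or.inl (hBcl hb'B hb''B hbb)⟩, G.adj_symm' hadj⟩

/-- Partner construction when `b' = v1`. -/
lemma partner_v1 (G : Trigraph V) {A B : Set V}
    (hAcl : G.IsStrongClique A) (hBcl : G.IsStrongClique B) (hABd : Disjoint A B)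
    {v1 v2 v3 v4 : V} (hsq : G.IsSquare v1 v2 v3 v4)
    (hsub : ({v1, v2, v3, v4} : Set V) ⊆ A ∪ B)
    {b'' x : V} (hb''mem : b'' ∈ ({v1, v2, v3, v4} : Set V))
    (hv1B : v1 ∈ B) (hb''B : b'' ∈ B) (hxA : x ∈ A)
    (hxnot : x ∉ ({v1, v2, v3, v4} : Set V))
    (hc : G.θ x v1 = 1) (ha : G.θ x b'' = -1) :
    ∃ u ∈ ({v1, v2, v3, v4} : Set V), G.IsSquare u x v1 b'' := by
  have h13 := hsq.1
  have hne13 : v1 ≠ v3 := h13.1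
  have hv3A : v3 ∈ A := by
    rcases hsub (show v3 ∈ ({v1, v2, v3, v4} : Set V) by simp) with h | h
    · exact h
    · exfalso
      have h1 : G.θ v1 v3 = 1 := hBcl hv1B h hne13
      rcases h13.2 with h0 | h0 <;> omega
  have hux : v3 ≠ x := fun h => hxnot (h ▸ (by simp : v3 ∈ ({v1, v2, v3, v4} : Set V)))
  have hb''v1 : b'' ≠ v1 := fun h => by rw [h, hc] at ha; norm_num at ha
  have hb''v3 : b'' ≠ v3 := fun h =>
    (Set.disjoint_left.mp hABd hv3A) (h ▸ hb''B)
  have hadj : G.Adj v3 b'' := by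
    rcases (by simpa using hb''mem : b'' = v1 ∨ b'' = v2 ∨ b'' = v3 ∨ b'' = v4) with
      rfl | rfl | rfl | rfl
    · exact absurd rfl hb''v1
    · exact G.adj_symm' hsq.2.2.2.1
    · exact absurd rfl hb''v3
    · exact hsq.2.2.2.2.1
  exact ⟨v3, by simp, G.mk_square_core hAcl hBcl hv3A hv1B hb''B hxA hux
    (G.antiAdj_symm' h13) hadj hc ha⟩

/-- Given a square in `A ∪ B`, two of its vertices `b' b'' ∈ B`, and `x ∈ A` outside
the square strongly adjacent to `b'` and strongly antiadjacent to `b''`, there is a new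
square `u x b' b''` with `u` a vertex of the old square. -/
lemma partner (G : Trigraph V) {A B : Set V}
    (hAcl : G.IsStrongClique A) (hBcl : G.IsStrongClique B) (hABd : Disjoint A B)
    {v1 v2 v3 v4 : V} (hsq : G.IsSquare v1 v2 v3 v4)
    (hsub : ({v1, v2, v3, v4} : Set V) ⊆ A ∪ B)
    {b' b'' x : V} (hb'mem : b' ∈ ({v1, v2, v3, v4} : Set V))
    (hb''mem : b'' ∈ ({v1, v2, v3, v4} : Set V))
    (hb'B : b' ∈ B) (hb''B : b'' ∈ B) (hxA : x ∈ A)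
    (hxnot : x ∉ ({v1, v2, v3, v4} : Set V))
    (hc : G.θ x b' = 1) (ha : G.θ x b'' = -1) :
    ∃ u ∈ ({v1, v2, v3, v4} : Set V), G.IsSquare u x b' b'' := by
  have hset2 : ({v2, v3, v4, v1} : Set V) = {v1, v2, v3, v4} := by ext y; simp; tauto
  have hset3 : ({v3, v4, v1, v2} : Set V) = {v1, v2, v3, v4} := by ext y; simp; tauto
  have hset4 : ({v4, v1, v2, v3} : Set V) = {v1, v2, v3, v4} := by ext y; simp; tauto
  rcases (by simpa using hb'mem : b' = v1 ∨ b' = v2 ∨ b' = v3 ∨ b' = v4) with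
    rfl | rfl | rfl | rfl
  · exact G.partner_v1 hAcl hBcl hABd hsq hsub hb''mem hb'B hb''B hxA hxnot hc ha
  · obtain ⟨u, hu, hs⟩ := G.partner_v1 hAcl hBcl hABd (G.isSquare_rot hsq)
      (by rw [hset2]; exact hsub) (by rw [hset2]; exact hb''mem) hb'B hb''B hxA
      (by rw [hset2]; exact hxnot) hc ha
    exact ⟨u, by rw [hset2] at hu; exact hu, hs⟩
  · obtain ⟨u, hu, hs⟩ := G.partner_v1 hAcl hBcl hABd (G.isSquare_rot (G.isSquare_rot hsq))
      (by rw [hset3]; exact hsub) (by rw [hset3]; exact hb''mem) hb'B hb''B hxA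
      (by rw [hset3]; exact hxnot) hc ha
    exact ⟨u, by rw [hset3] at hu; exact hu, hs⟩
  · obtain ⟨u, hu, hs⟩ := G.partner_v1 hAcl hBcl hABd
      (G.isSquare_rot (G.isSquare_rot (G.isSquare_rot hsq)))
      (by rw [hset4]; exact hsub) (by rw [hset4]; exact hb''mem) hb'B hb''B hxA
      (by rw [hset4]; exact hxnot) hc ha
    exact ⟨u, by rw [hset4] at hu; exact hu, hs⟩

/-- A square inside `P ∪ Q` with `P`, `Q` inside the two cliques yields an antiadjacent
pair crossing between `P` and `Q`. -/
lemma square_cross (G : Trigraph V) {A B P Q : Set V}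
    (hAcl : G.IsStrongClique A) (hBcl : G.IsStrongClique B)
    (hP : P ⊆ A) (hQ : Q ⊆ B)
    {v1 v2 v3 v4 : V} (hsq : G.IsSquare v1 v2 v3 v4)
    (hsub : ({v1, v2, v3, v4} : Set V) ⊆ P ∪ Q) :
    ∃ p ∈ P, ∃ q ∈ Q, G.AntiAdj p q := by
  have h13 := hsq.1
  have h1 : v1 ∈ P ∪ Q := hsub (by simp)
  have h3 : v3 ∈ P ∪ Q := hsub (by simp)
  rcases h1 with h1 | h1 <;> rcases h3 with h3 | h3
  · exfalso
    have hs : G.θ v1 v3 = 1 := hAcl (hP h1) (hP h3) h13.1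
    rcases h13.2 with h0 | h0 <;> omega
  · exact ⟨v1, h1, v3, h3, h13⟩
  · exact ⟨v3, h3, v1, h1, G.antiAdj_symm' h13⟩
  · exfalso
    have hs : G.θ v1 v3 = 1 := hBcl (hQ h1) (hQ h3) h13.1
    rcases h13.2 with h0 | h0 <;> omega

/-- A square-connected pair contains a square. -/
lemma sc_square (G : Trigraph V) {P Q : Set V} (h : G.SquareConnected P Q) :
    ∃ v1 v2 v3 v4 : V, G.IsSquare v1 v2 v3 v4 ∧ ({v1, v2, v3, v4} : Set V) ⊆ P ∪ Q := by
  obtain ⟨⟨hPne, hQne, _, _, _, hsing, _⟩, hPc, hQc⟩ := h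
  obtain ⟨p, hp⟩ := hPne
  obtain ⟨q, hq⟩ := hQne
  by_cases hP1 : ∃ p' ∈ P, p' ≠ p
  · obtain ⟨p', hp', hne⟩ := hP1
    obtain ⟨v1, v2, v3, v4, hsq, hsub, -, -⟩ := hPc {p} (P \ {p}) ⟨p, rfl⟩
      ⟨p', hp', hne⟩ (Set.union_diff_cancel (by simp [hp])) Set.disjoint_sdiff_right
    exact ⟨v1, v2, v3, v4, hsq, hsub⟩
  · push_neg at hP1
    have hPs : P = {p} := Set.eq_singleton_iff_unique_mem.mpr ⟨hp, hP1⟩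
    have hQ1 : ∃ q' ∈ Q, q' ≠ q := by
      by_contra hcon
      push_neg at hcon
      exact hsing ⟨p, q, hPs, Set.eq_singleton_iff_unique_mem.mpr ⟨hq, hcon⟩⟩
    obtain ⟨q', hq', hne⟩ := hQ1
    obtain ⟨v1, v2, v3, v4, hsq, hsub, -, -⟩ := hQc {q} (Q \ {q}) ⟨q, rfl⟩
      ⟨q', hq', hne⟩ (Set.union_diff_cancel (by simp [hq])) Set.disjoint_sdiff_right
    exact ⟨v1, v2, v3, v4, hsq, hsub⟩

/-- Core of parts 1 and 2 of the theorem. -/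
lemma half (G : Trigraph V) {A B A1 B1 A2 B2 : Set V}
    (hAcl : G.IsStrongClique A) (hBcl : G.IsStrongClique B) (hABd : Disjoint A B)
    (hA1 : A1 ⊆ A) (hB1 : B1 ⊆ B) (hA2 : A2 ⊆ A)
    (hd1 : Disjoint A1 A2) (hd3 : Disjoint B1 A2)
    (hA2ne : A2.Nonempty)
    (hdich : ∀ b ∈ B1, G.StronglyComplete {b} A2 ∨ G.StronglyAnticomplete {b} A2)
    (hB1clause : ∀ B' B'' : Set V, B'.Nonempty → B''.Nonempty → B' ∪ B'' = B1 →
      Disjoint B' B'' → G.SquareMeets (A1 ∪ B1) B' B'')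
    (hnosq : ¬ G.SquareMeets (A ∪ B) (A1 ∪ B1) (A2 ∪ B2)) :
    G.StronglyComplete A2 B1 ∨ G.StronglyAnticomplete A2 B1 := by
  by_cases hall : ∀ b ∈ B1, G.StronglyComplete {b} A2
  · left
    intro u hu v hv
    have hvu : G.θ v u = 1 := hall v hv v rfl u hu
    show G.θ u v = 1
    rw [G.symm]
    exact hvu
  by_cases hnone : ∀ b ∈ B1, G.StronglyAnticomplete {b} A2
  · right
    intro u hu v hv
    have hvu : G.θ v u = -1 := hnone v hv v rfl u hu
    show G.θ u v = -1
    rw [G.symm]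
    exact hvu
  push_neg at hall hnone
  obtain ⟨b0, hb0, hb0n⟩ := hall
  obtain ⟨b1, hb1, hb1n⟩ := hnone
  have hb1c : G.StronglyComplete {b1} A2 := (hdich b1 hb1).resolve_right hb1n
  have hsm := hB1clause {b ∈ B1 | G.StronglyComplete {b} A2}
    (B1 \ {b ∈ B1 | G.StronglyComplete {b} A2})
    ⟨b1, hb1, hb1c⟩ ⟨b0, hb0, fun hmem => hb0n hmem.2⟩
    (Set.union_diff_cancel (Set.sep_subset _ _)) Set.disjoint_sdiff_right
  obtain ⟨v1, v2, v3, v4, hsq, hsub, ⟨c1, hc1s, hc1P⟩, ⟨c0, hc0s, hc0Q⟩⟩ := hsm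
  obtain ⟨x, hx⟩ := hA2ne
  have hc1B1 : c1 ∈ B1 := hc1P.1
  have hc0B1 : c0 ∈ B1 := hc0Q.1
  have hc0a : G.StronglyAnticomplete {c0} A2 := (hdich c0 hc0B1).resolve_left (fun hcmp => hc0Q.2 ⟨hc0B1, hcmp⟩)
  have hθ1 : G.θ x c1 = 1 := by rw [G.symm]; exact hc1P.2 c1 rfl x hx
  have hθ0 : G.θ x c0 = -1 := by rw [G.symm]; exact hc0a c0 rfl x hx
  have hxnot : x ∉ ({v1, v2, v3, v4} : Set V) := fun hmem => by
    rcases hsub hmem with h | h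
    · exact (Set.disjoint_left.mp hd1 h) hx
    · exact (Set.disjoint_left.mp hd3 h) hx
  have hsub' : ({v1, v2, v3, v4} : Set V) ⊆ A ∪ B :=
    hsub.trans (Set.union_subset_union hA1 hB1)
  obtain ⟨u, hu, husq⟩ := G.partner hAcl hBcl hABd hsq hsub' hc1s hc0s
    (hB1 hc1B1) (hB1 hc0B1) (hA2 hx) hxnot hθ1 hθ0
  refine absurd ⟨u, x, c1, c0, husq, ?_, ⟨u, by simp, hsub hu⟩,
    ⟨x, by simp, Or.inl hx⟩⟩ hnosq
  intro y hy
  rcases (by simpa using hy : y = u ∨ y = x ∨ y = c1 ∨ y = c0) with rfl | rfl | rfl | rfl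
  exacts [hsub' hu, Or.inl (hA2 hx), Or.inr (hB1 hc1B1), Or.inr (hB1 hc0B1)]

end Trigraph
/-- If (A1, B1) and (A2, B2) are disjoint square-connected homogeneous
pairs of strong cliques inside a homogeneous pair of strong cliques (A, B), and no square
of G contained in A ∪ B intersects both A1 ∪ B1 and A2 ∪ B2, then A2 is strongly complete
or strongly anticomplete to B1, B2 is strongly complete or strongly anticomplete to A1,
and A2 and B2 are not both strongly complete (to B1 and A1 respectively). -/
theorem disjoint_squareConnected_pairs {V : Type} [Fintype V] (G : Trigraph V)
    (A B A1 B1 A2 B2 : Set V)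
    (hAB : G.HPOSC A B)
    (h1 : G.SquareConnected A1 B1) (h2 : G.SquareConnected A2 B2)
    (hd1 : Disjoint A1 A2) (hd2 : Disjoint A1 B2)
    (hd3 : Disjoint B1 A2) (hd4 : Disjoint B1 B2)
    (hA : A1 ∪ A2 ⊆ A) (hB : B1 ∪ B2 ⊆ B)
    (hnosq : ¬ G.SquareMeets (A ∪ B) (A1 ∪ B1) (A2 ∪ B2)) :
    (G.StronglyComplete A2 B1 ∨ G.StronglyAnticomplete A2 B1) ∧
    (G.StronglyComplete B2 A1 ∨ G.StronglyAnticomplete B2 A1) ∧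
    ¬ (G.StronglyComplete A2 B1 ∧ G.StronglyComplete B2 A1) := by
  obtain ⟨-, -, hABd, hAcl, hBcl, -, -⟩ := hAB
  obtain ⟨hA2ne, hB2ne, -, -, -, -, hhom2⟩ := h2.1
  have hA1s : A1 ⊆ A := fun y hy => hA (Or.inl hy)
  have hA2s : A2 ⊆ A := fun y hy => hA (Or.inr hy)
  have hB1s : B1 ⊆ B := fun y hy => hB (Or.inl hy)
  have hB2s : B2 ⊆ B := fun y hy => hB (Or.inr hy)
  have hdich1 : ∀ b ∈ B1, G.StronglyComplete {b} A2 ∨ G.StronglyAnticomplete {b} A2 := by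
    intro b hb
    have hbnot : b ∉ A2 ∪ B2 := by
      rintro (h | h)
      · exact (Set.disjoint_left.mp hd3 hb) h
      · exact (Set.disjoint_left.mp hd4 hb) h
    exact (hhom2 b hbnot).1
  have hdich2 : ∀ a ∈ A1, G.StronglyComplete {a} B2 ∨ G.StronglyAnticomplete {a} B2 := by
    intro a ha'
    have hanot : a ∉ A2 ∪ B2 := by
      rintro (h | h)
      · exact (Set.disjoint_left.mp hd1 ha') h
      · exact (Set.disjoint_left.mp hd2 ha') h
    exact (hhom2 a hanot).2
  have p1 : G.StronglyComplete A2 B1 ∨ G.StronglyAnticomplete A2 B1 :=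
    G.half hAcl hBcl hABd hA1s hB1s hA2s hd1 hd3 hA2ne hdich1 h1.2.2 hnosq
  have hclause : ∀ B' B'' : Set V, B'.Nonempty → B''.Nonempty → B' ∪ B'' = A1 →
      Disjoint B' B'' → G.SquareMeets (B1 ∪ A1) B' B'' := by
    intro B' B'' h1' h2' h3' h4'
    rw [Set.union_comm]
    exact h1.2.1 B' B'' h1' h2' h3' h4'
  have hnosq2 : ¬ G.SquareMeets (B ∪ A) (B1 ∪ A1) (B2 ∪ A2) := by
    rw [Set.union_comm B A, Set.union_comm B1 A1, Set.union_comm B2 A2]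
    exact hnosq
  have p2 : G.StronglyComplete B2 A1 ∨ G.StronglyAnticomplete B2 A1 :=
    G.half hBcl hAcl hABd.symm hB1s hA1s hB2s hd4 hd2 hB2ne hdich2 hclause hnosq2
  refine ⟨p1, p2, ?_⟩
  rintro ⟨hcA, hcB⟩
  obtain ⟨w1, w2, w3, w4, hsq1, hsub1⟩ := G.sc_square h1
  obtain ⟨a0, ha0, b0, hb0, hab⟩ := G.square_cross hAcl hBcl hA1s hB1s hsq1 hsub1
  obtain ⟨u1, u2, u3, u4, hsq2, hsub2⟩ := G.sc_square h2
  obtain ⟨x, hx, y, hy, hxy⟩ := G.square_cross hAcl hBcl hA2s hB2s hsq2 hsub2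
  have hax : a0 ≠ x := fun h => (Set.disjoint_left.mp hd1 ha0) (h ▸ hx)
  have hby : b0 ≠ y := fun h => (Set.disjoint_left.mp hd4 hb0) (h ▸ hy)
  have hθxb : G.θ x b0 = 1 := hcA x hx b0 hb0
  have hθya : G.θ y a0 = 1 := hcB y hy a0 ha0
  have hxb0 : x ≠ b0 := fun h => by rw [h, G.refl_zero] at hθxb; norm_num at hθxb
  have hya0 : y ≠ a0 := fun h => by rw [h, G.refl_zero] at hθya; norm_num at hθya
  have hsq : G.IsSquare a0 x b0 y :=
    ⟨hab, hxy, ⟨hax, Or.inl (hAcl (hA1s ha0) (hA2s hx) hax)⟩,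
      ⟨hxb0, Or.inl hθxb⟩, ⟨hby, Or.inl (hBcl (hB1s hb0) (hB2s hy) hby)⟩,
      ⟨hya0, Or.inl hθya⟩⟩
  refine hnosq ⟨a0, x, b0, y, hsq, ?_, ⟨a0, by simp, Or.inl ha0⟩, ⟨x, by simp, Or.inl hx⟩⟩
  intro z hz
  rcases (by simpa using hz : z = a0 ∨ z = x ∨ z = b0 ∨ z = y) with rfl | rfl | rfl | rfl
  exacts [Or.inl (hA1s ha0), Or.inl (hA2s hx), Or.inr (hB1s hb0), Or.inr (hB2s hy)]
end
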